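/- Let θ ≥ 2 be an integer and φ : Δ_θ → ℝ continuous. Then the function g : Δ_θ → ℝ given by g(x) = max_{y ∈ Δ_θ(x)} φ(y) is well-defined (the maximum is attained) and continuous on Δ_θ. -/

import Mathlib

/-!
The correspondence `x ↦ Δ_θ(x)` has nonempty compact values and is Lipschitz from below: if
`y ⊵ x` and `ε = θ ‖x - x'‖_∞`, raise the partial sums of `y` by `ε` (all but the empty one) and
cap them at `1`. The result is still increasing and concave from `0` to `1`, so it is the
sequence of partial sums of some `y' ∈ Δ_θ`; it dominates the partial sums of `x'`, and
`‖y' - y‖_∞ ≤ ε`. Since `φ` is uniformly continuous on the compact set `Δ_θ`, the maximum of `φ`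
over `Δ_θ(x)` then moves continuously with `x`.
-/

/-- The set `Δ_θ` of decreasing probability vectors in `ℝ^θ`. -/
def simplexOrd (θ : ℕ) : Set (Fin θ → ℝ) :=
  {x | (∀ i j : Fin θ, i ≤ j → x j ≤ x i) ∧ (∀ i, 0 ≤ x i) ∧ ∑ i, x i = 1}

/-- `y ⊵ x`: domination of partial sums. -/
def domR (θ : ℕ) (y x : Fin θ → ℝ) : Prop :=
  ∀ j : Fin θ, (∑ i ∈ Finset.univ.filter (fun i : Fin θ => i ≤ j), x i)
    ≤ ∑ i ∈ Finset.univ.filter (fun i : Fin θ => i ≤ j), y i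

/-- `Δ_θ(x) = {y ∈ Δ_θ : y ⊵ x}`. -/
def domSet (θ : ℕ) (x : Fin θ → ℝ) : Set (Fin θ → ℝ) :=
  {y ∈ simplexOrd θ | domR θ y x}

open Finset

lemma sSup_image_le_sSup_image_add {β : Type*} {φ : β → ℝ} {A B : Set β} {ε : ℝ}
    (hA : A.Nonempty) (hB : BddAbove (φ '' B)) (hAB : ∀ y ∈ A, ∃ y' ∈ B, φ y ≤ φ y' + ε) :
    sSup (φ '' A) ≤ sSup (φ '' B) + ε := by
  refine csSup_le (hA.image φ) ?_
  rintro _ ⟨y, hy, rfl⟩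
  obtain ⟨y', hy', hyy'⟩ := hAB y hy
  linarith [le_csSup hB (Set.mem_image_of_mem φ hy')]

lemma continuousOn_sSup_image {α β : Type*} [PseudoMetricSpace α] [PseudoMetricSpace β]
    {s : Set α} {t : Set β} {K : α → Set β} {φ : β → ℝ} {L : ℝ}
    (hφ : UniformContinuousOn φ t) (hL : 0 ≤ L) (hKt : ∀ x ∈ s, K x ⊆ t)
    (hne : ∀ x ∈ s, (K x).Nonempty) (hbdd : ∀ x ∈ s, BddAbove (φ '' K x))
    (hK : ∀ x ∈ s, ∀ x' ∈ s, ∀ y ∈ K x, ∃ y' ∈ K x', dist y' y ≤ L * dist x x') :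
    ContinuousOn (fun x => sSup (φ '' K x)) s := by
  rw [Metric.continuousOn_iff]
  intro x hx ε hε
  obtain ⟨δ, hδ, hφδ⟩ := Metric.uniformContinuousOn_iff.mp hφ (ε / 2) (half_pos hε)
  obtain ⟨ρ, hρ, hLρ⟩ := exists_pos_mul_lt hδ L
  have hshift : ∀ a ∈ s, ∀ b ∈ s, dist a b < ρ →
      sSup (φ '' K a) ≤ sSup (φ '' K b) + ε / 2 := by
    intro a ha b hb hab
    refine sSup_image_le_sSup_image_add (hne a ha) (hbdd b hb) fun y hy => ?_
    obtain ⟨y', hy', hyy'⟩ := hK a ha b hb y hy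
    have hclose : dist y' y < δ :=
      hyy'.trans_lt ((mul_le_mul_of_nonneg_left hab.le hL).trans_lt hLρ)
    have := hφδ y' (hKt b hb hy') y (hKt a ha hy) hclose
    refine ⟨y', hy', ?_⟩
    linarith [(abs_lt.mp (Real.dist_eq _ _ ▸ this)).1]
  refine ⟨ρ, hρ, fun x' hx' hxx' => ?_⟩
  rw [Real.dist_eq, abs_lt]
  constructor
  · linarith [hshift x hx x' hx' (dist_comm x' x ▸ hxx')]
  · linarith [hshift x' hx' x hx hxx']

variable {θ : ℕ}

lemma isClosed_simplexOrd : IsClosed (simplexOrd θ) := by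
  simp only [simplexOrd, Set.ofPred_and, Set.ofPred_forall]
  refine .inter (isClosed_iInter fun i => isClosed_iInter fun j => isClosed_iInter fun _ =>
    isClosed_le (continuous_apply j) (continuous_apply i))
    (.inter (isClosed_iInter fun i => isClosed_le continuous_const (continuous_apply i))
      (isClosed_eq (by fun_prop) continuous_const))

lemma simplexOrd_subset_Icc : simplexOrd θ ⊆ Set.Icc 0 1 := fun _ ⟨_, hpos, hsum⟩ =>
  ⟨hpos, fun i => (single_le_sum (fun j _ => hpos j) (mem_univ i)).trans hsum.le⟩

lemma isCompact_simplexOrd : IsCompact (simplexOrd θ) :=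
  isCompact_Icc.of_isClosed_subset isClosed_simplexOrd simplexOrd_subset_Icc

lemma domSet_subset_simplexOrd (x : Fin θ → ℝ) : domSet θ x ⊆ simplexOrd θ := fun _ hy => hy.1

lemma isCompact_domSet (x : Fin θ → ℝ) : IsCompact (domSet θ x) := by
  refine isCompact_simplexOrd.of_isClosed_subset
    (isClosed_simplexOrd.inter (s₂ := {y | domR θ y x}) ?_) (domSet_subset_simplexOrd x)
  simp only [domR, Set.ofPred_forall]
  exact isClosed_iInter fun j => isClosed_le continuous_const (by fun_prop)

lemma self_mem_domSet {x : Fin θ → ℝ} (hx : x ∈ simplexOrd θ) : x ∈ domSet θ x :=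
  ⟨hx, fun _ => le_rfl⟩

lemma pos_of_mem_simplexOrd {x : Fin θ → ℝ} (hx : x ∈ simplexOrd θ) : 0 < θ := by
  rcases Nat.eq_zero_or_pos θ with rfl | h
  · simpa using hx.2.2
  · exact h

def partialSum (x : Fin θ → ℝ) (n : ℕ) : ℝ :=
  ∑ i ∈ univ.filter (fun i : Fin θ => (i : ℕ) < n), x i

lemma partialSum_zero (x : Fin θ → ℝ) : partialSum x 0 = 0 := by simp [partialSum]

lemma partialSum_succ (x : Fin θ → ℝ) (n : ℕ) :
    partialSum x (n + 1) = partialSum x n + if h : n < θ then x ⟨n, h⟩ else 0 := by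
  unfold partialSum
  split_ifs with h
  · rw [show univ.filter (fun i : Fin θ => (i : ℕ) < n + 1) =
        insert ⟨n, h⟩ (univ.filter fun i : Fin θ => (i : ℕ) < n) by
      ext i; simp [Fin.ext_iff]; omega, sum_insert (by simp), add_comm]
  · rw [add_zero]
    exact sum_congr (filter_congr fun i _ => by omega) fun _ _ => rfl

lemma partialSum_of_le (x : Fin θ → ℝ) {n : ℕ} (hn : θ ≤ n) : partialSum x n = ∑ i, x i :=
  congrArg (∑ i ∈ ·, x i) (filter_true_of_mem fun i _ => i.isLt.trans_le hn)

lemma domR_iff_partialSum (y x : Fin θ → ℝ) :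
    domR θ y x ↔ ∀ j : Fin θ, partialSum x (j + 1) ≤ partialSum y (j + 1) := by
  have hfilter (j : Fin θ) : univ.filter (fun i : Fin θ => i ≤ j) =
      univ.filter (fun i : Fin θ => (i : ℕ) < j + 1) :=
    filter_congr fun i _ => by rw [Fin.le_def]; omega
  simp only [domR, partialSum, hfilter]

lemma partialSum_mono {x : Fin θ → ℝ} (hx : ∀ i, 0 ≤ x i) : Monotone (partialSum x) :=
  fun _ _ hmn => sum_le_sum_of_subset_of_nonneg
    (monotone_filter_right _ fun _ _ h => lt_of_lt_of_le h hmn) fun i _ _ => hx i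

lemma partialSum_le_one {x : Fin θ → ℝ} (hx : x ∈ simplexOrd θ) (n : ℕ) : partialSum x n ≤ 1 :=
  hx.2.2 ▸ sum_le_sum_of_subset_of_nonneg (filter_subset _ _) fun i _ _ => hx.2.1 i

lemma antitone_fwdDiff_partialSum {x : Fin θ → ℝ} (hx : x ∈ simplexOrd θ) :
    Antitone (fwdDiff 1 (partialSum x)) := by
  intro m n hmn
  simp only [fwdDiff, partialSum_succ, add_sub_cancel_left]
  split_ifs with hn hm hm
  · exact hx.1 _ _ (Fin.mk_le_mk.mpr hmn)
  · omega
  · exact hx.2.1 _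
  · rfl

lemma partialSum_sub_le (x x' : Fin θ → ℝ) (n : ℕ) :
    partialSum x' n - partialSum x n ≤ θ * dist x x' := by
  rw [partialSum, partialSum, ← sum_sub_distrib]
  calc _ ≤ ∑ _i ∈ univ.filter (fun i : Fin θ => (i : ℕ) < n), dist x x' :=
        sum_le_sum fun i _ => (le_abs_self _).trans (by
          rw [← Real.dist_eq, dist_comm]; exact dist_le_pi_dist x x' i)
    _ ≤ θ * dist x x' := by
        rw [sum_const, nsmul_eq_mul]
        refine mul_le_mul_of_nonneg_right ?_ dist_nonneg
        exact_mod_cast (card_filter_le _ _).trans_eq (card_fin θ)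

lemma partialSum_fwdDiff (T : ℕ → ℝ) {n : ℕ} (hn : n ≤ θ) :
    partialSum (fun i : Fin θ => fwdDiff 1 T i) n = T n - T 0 := by
  induction n with
  | zero => simp [partialSum_zero]
  | succ n ih => rw [partialSum_succ, ih (by omega), dif_pos (by omega), fwdDiff]; ring

lemma fwdDiff_mem_simplexOrd {T : ℕ → ℝ} (hT0 : T 0 = 0) (hTθ : T θ = 1) (hmono : Monotone T)
    (hconc : Antitone (fwdDiff 1 T)) : (fun i : Fin θ => fwdDiff 1 T i) ∈ simplexOrd θ := by
  refine ⟨fun i j hij => hconc (Fin.le_def.mp hij), fun i => sub_nonneg.mpr (hmono (by omega)),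
    ?_⟩
  rw [← partialSum_of_le _ le_rfl, partialSum_fwdDiff T le_rfl, hT0, hTθ, sub_zero]

lemma antitone_fwdDiff_min {f g : ℕ → ℝ} (hf : Antitone (fwdDiff 1 f))
    (hg : Antitone (fwdDiff 1 g)) : Antitone (fwdDiff 1 fun n => min (f n) (g n)) := by
  refine antitone_nat_of_succ_le fun n => ?_
  have hfn := hf n.le_succ
  have hgn := hg n.le_succ
  simp only [fwdDiff] at hfn hgn ⊢
  rcases min_cases (f (n + 1)) (g (n + 1)) with ⟨h, -⟩ | ⟨h, -⟩ <;> rw [h] <;>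
    linarith [min_le_left (f (n + 2)) (g (n + 2)), min_le_right (f (n + 2)) (g (n + 2)),
      min_le_left (f n) (g n), min_le_right (f n) (g n)]

def liftedPartialSum (y : Fin θ → ℝ) (ε : ℝ) (n : ℕ) : ℝ :=
  min (partialSum y n + if n = 0 then 0 else ε) 1

section liftedPartialSum

variable {y : Fin θ → ℝ} {ε : ℝ}

lemma liftedPartialSum_zero : liftedPartialSum y ε 0 = 0 := by
  simp [liftedPartialSum, partialSum_zero]

lemma liftedPartialSum_self (hy : y ∈ simplexOrd θ) (hε : 0 ≤ ε) (hθ : θ ≠ 0) :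
    liftedPartialSum y ε θ = 1 := by
  rw [liftedPartialSum, if_neg hθ, partialSum_of_le y le_rfl, hy.2.2]
  exact min_eq_right (le_add_of_nonneg_right hε)

lemma partialSum_le_liftedPartialSum (hy : y ∈ simplexOrd θ) (hε : 0 ≤ ε) (n : ℕ) :
    partialSum y n ≤ liftedPartialSum y ε n := by
  refine le_min (le_add_of_nonneg_right ?_) (partialSum_le_one hy n)
  split_ifs <;> linarith

lemma liftedPartialSum_le (hε : 0 ≤ ε) (n : ℕ) : liftedPartialSum y ε n ≤ partialSum y n + ε := by
  refine (min_le_left _ _).trans (add_le_add_right ?_ _)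
  split_ifs <;> linarith

lemma monotone_liftedPartialSum (hy : y ∈ simplexOrd θ) (hε : 0 ≤ ε) :
    Monotone (liftedPartialSum y ε) := by
  intro m n hmn
  refine min_le_min_right 1 (add_le_add (partialSum_mono hy.2.1 hmn) ?_)
  split_ifs <;> first | omega | linarith

lemma antitone_fwdDiff_liftedPartialSum (hy : y ∈ simplexOrd θ) (hε : 0 ≤ ε) :
    Antitone (fwdDiff 1 (liftedPartialSum y ε)) := by
  have hbump : Antitone (fwdDiff 1 fun n : ℕ => if n = 0 then 0 else ε) := by
    intro m n hmn
    simp only [fwdDiff]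
    split_ifs <;> first | omega | linarith
  refine antitone_fwdDiff_min (f := partialSum y + fun n => if n = 0 then 0 else ε)
    (g := fun _ => 1) ?_ (by simp [antitone_const])
  rw [fwdDiff_add]
  exact (antitone_fwdDiff_partialSum hy).add hbump

end liftedPartialSum

lemma exists_mem_domSet_dist_le {x x' y : Fin θ → ℝ} (hx : x ∈ simplexOrd θ)
    (hx' : x' ∈ simplexOrd θ) (hy : y ∈ domSet θ x) :
    ∃ y' ∈ domSet θ x', dist y' y ≤ θ * dist x x' := by
  obtain ⟨hyΔ, hyx⟩ := hy
  set ε : ℝ := θ * dist x x'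
  have hε : 0 ≤ ε := by positivity
  have hy'Δ : (fun i : Fin θ => fwdDiff 1 (liftedPartialSum y ε) i) ∈ simplexOrd θ :=
    fwdDiff_mem_simplexOrd liftedPartialSum_zero
      (liftedPartialSum_self hyΔ hε (pos_of_mem_simplexOrd hx).ne')
      (monotone_liftedPartialSum hyΔ hε) (antitone_fwdDiff_liftedPartialSum hyΔ hε)
  refine ⟨_, ⟨hy'Δ, ?_⟩, ?_⟩
  · rw [domR_iff_partialSum] at hyx ⊢
    intro j
    rw [partialSum_fwdDiff _ j.isLt, liftedPartialSum_zero, sub_zero]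
    refine le_min ?_ (partialSum_le_one hx' _)
    rw [if_neg (Nat.succ_ne_zero _)]
    linarith [partialSum_sub_le x x' (j + 1), hyx j]
  · refine (dist_pi_le_iff hε).mpr fun i => ?_
    have hyi : y i = partialSum y (i + 1) - partialSum y i := by
      rw [partialSum_succ, dif_pos i.isLt]; ring
    rw [Real.dist_eq, abs_le, hyi, fwdDiff]
    constructor <;> linarith [partialSum_le_liftedPartialSum hyΔ hε i,
      partialSum_le_liftedPartialSum hyΔ hε (i + 1), liftedPartialSum_le (y := y) hε i,
      liftedPartialSum_le (y := y) hε (i + 1)]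

theorem stmt6_general (θ : ℕ)
    (φ : (Fin θ → ℝ) → ℝ) (hφ : ContinuousOn φ (simplexOrd θ)) :
    (∀ x ∈ simplexOrd θ, IsGreatest (φ '' domSet θ x) (sSup (φ '' domSet θ x))) ∧
    ContinuousOn (fun x => sSup (φ '' domSet θ x)) (simplexOrd θ) := by
  have hcompact (x : Fin θ → ℝ) : IsCompact (φ '' domSet θ x) :=
    (isCompact_domSet x).image_of_continuousOn (hφ.mono (domSet_subset_simplexOrd x))
  have hne (x : Fin θ → ℝ) (hx : x ∈ simplexOrd θ) : (domSet θ x).Nonempty :=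
    ⟨x, self_mem_domSet hx⟩
  refine ⟨fun x hx => (hcompact x).isGreatest_sSup ((hne x hx).image φ), ?_⟩
  exact continuousOn_sSup_image (isCompact_simplexOrd.uniformContinuousOn_of_continuous hφ)
    θ.cast_nonneg (fun x _ => domSet_subset_simplexOrd x) hne
    (fun x _ => (hcompact x).bddAbove) fun _ hx _ hx' _ hy => exists_mem_domSet_dist_le hx hx' hy

/-- `g(x) = max_{y ∈ Δ_θ(x)} φ(y)` is well-defined (the max is attained)
and continuous on `Δ_θ`. -/
theorem stmt6 (θ : ℕ) (hθ : 2 ≤ θ)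
    (φ : (Fin θ → ℝ) → ℝ) (hφ : ContinuousOn φ (simplexOrd θ)) :
    (∀ x ∈ simplexOrd θ, IsGreatest (φ '' domSet θ x) (sSup (φ '' domSet θ x))) ∧
    ContinuousOn (fun x => sSup (φ '' domSet θ x)) (simplexOrd θ) :=
  stmt6_general θ φ hφ
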